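/- Equivalence of big-step and stack-based small-step semantics: for every statement s and store σ, ⟨ε, s⟩ ⇓ σ holds in the big-step semantics if and only if ⟨ε, s, []⟩ →* ⟨σ, skip, []⟩ holds in the stack-based small-step semantics, where ε is the empty store. -/
import Mathlib


/-- Janus reversible assignment operators: `+=`, `-=`, `^=`. -/
inductive Op where
  | add | sub | xor
deriving DecidableEq

/-- The operator inverter `I_op`. -/
def Op.inv : Op → Op
  | .add => .sub
  | .sub => .add
  | .xor => .xor

/-- Interpretation of the operators on integers. -/
def Op.apply : Op → Int → Int → Int
  | .add, a, b => a + b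
  | .sub, a, b => a - b
  | .xor, a, b => Int.xor a b

/-- Storage locations: plain variables and indexed array cells. -/
inductive Loc where
  | var (x : String)
  | arr (x : String) (i : Int)
deriving DecidableEq

/-- A store maps variable names and indexed variable names to values. -/
def Store := Loc → Int

def Store.update (σ : Store) (l : Loc) (v : Int) : Store :=
  fun l' => if l' = l then v else σ l'

/-- The empty store maps every variable to zero. -/
def emptyStore : Store := fun _ => 0

/-- Janus expressions. Binary operators are modelled by their interpretation. -/
inductive Expr where
  | const (c : Int)
  | var (x : String)
  | arr (x : String) (e : Expr)
  | bop (f : Int → Int → Int) (e1 e2 : Expr)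

/-- Evaluation of expressions (a deterministic function of the store). -/
def Expr.eval (σ : Store) : Expr → Int
  | .const c => c
  | .var x => σ (.var x)
  | .arr x e => σ (.arr x (Expr.eval σ e))
  | .bop f e1 e2 => f (Expr.eval σ e1) (Expr.eval σ e2)
/-- Janus statements. -/
inductive Stmt where
  | assign (x : String) (op : Op) (e : Expr)
  | assignArr (x : String) (ei : Expr) (op : Op) (e : Expr)
  | cond (e1 : Expr) (s1 s2 : Stmt) (e2 : Expr)
  | loop (e1 : Expr) (s1 s2 : Stmt) (e2 : Expr)
  | call (id : String)
  | uncall (id : String)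
  | skip
  | seq (s1 s2 : Stmt)

/-- The Janus statement inverter `I`. -/
def Stmt.inv : Stmt → Stmt
  | .assign x op e => .assign x op.inv e
  | .assignArr x ei op e => .assignArr x ei op.inv e
  | .cond e1 s1 s2 e2 => .cond e2 s1.inv s2.inv e1
  | .loop e1 s1 s2 e2 => .loop e2 s1.inv s2.inv e1
  | .call id => .uncall id
  | .uncall id => .call id
  | .skip => .skip
  | .seq s1 s2 => .seq s2.inv s1.inv
mutual
/-- Big-step semantics of Janus, `⟨σ, s⟩ ⇓ σ'`. -/
inductive BigStep (Γ : String → Stmt) : Store → Stmt → Store → Prop where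
  | assVar {σ : Store} {x : String} {op : Op} {e : Expr} :
      BigStep Γ σ (.assign x op e)
        (σ.update (.var x) (op.apply (σ (.var x)) (e.eval σ)))
  | assArr {σ : Store} {x : String} {ei e : Expr} {op : Op} :
      BigStep Γ σ (.assignArr x ei op e)
        (σ.update (.arr x (ei.eval σ)) (op.apply (σ (.arr x (ei.eval σ))) (e.eval σ)))
  | call {σ σ' : Store} {id : String} :
      BigStep Γ σ (Γ id) σ' → BigStep Γ σ (.call id) σ'
  | uncall {σ σ' : Store} {id : String} :
      BigStep Γ σ (Γ id).inv σ' → BigStep Γ σ (.uncall id) σ'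
  | seq {σ σ' σ'' : Store} {s1 s2 : Stmt} :
      BigStep Γ σ s1 σ' → BigStep Γ σ' s2 σ'' → BigStep Γ σ (.seq s1 s2) σ''
  | ifTrue {σ σ' : Store} {e1 e2 : Expr} {s1 s2 : Stmt} :
      e1.eval σ ≠ 0 → BigStep Γ σ s1 σ' → e2.eval σ' ≠ 0 →
      BigStep Γ σ (.cond e1 s1 s2 e2) σ'
  | ifFalse {σ σ' : Store} {e1 e2 : Expr} {s1 s2 : Stmt} :
      e1.eval σ = 0 → BigStep Γ σ s2 σ' → e2.eval σ' = 0 →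
      BigStep Γ σ (.cond e1 s1 s2 e2) σ'
  | loopMain {σ σ' σ'' : Store} {e1 e2 : Expr} {s1 s2 : Stmt} :
      e1.eval σ ≠ 0 → BigStep Γ σ s1 σ' → BigLoop Γ σ' e1 s1 s2 e2 σ'' →
      BigStep Γ σ (.loop e1 s1 s2 e2) σ''
  | skip {σ : Store} : BigStep Γ σ .skip σ

/-- Big-step loop-iteration judgement on tuples `(e1, s1, e2, s2)`,
`⟨σ, (e1,s1,e2,s2)⟩ ⇓ σ'`. -/
inductive BigLoop (Γ : String → Stmt) : Store → Expr → Stmt → Stmt → Expr → Store → Prop where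
  | base {σ : Store} {e1 e2 : Expr} {s1 s2 : Stmt} :
      e2.eval σ ≠ 0 → BigLoop Γ σ e1 s1 s2 e2 σ
  | step {σ σ' σ'' σ''' : Store} {e1 e2 : Expr} {s1 s2 : Stmt} :
      e2.eval σ = 0 → BigStep Γ σ s2 σ' → e1.eval σ' = 0 → BigStep Γ σ' s1 σ'' →
      BigLoop Γ σ'' e1 s1 s2 e2 σ''' → BigLoop Γ σ e1 s1 s2 e2 σ'''
end
/-- Stack elements of the stack-based small-step semantics. -/
inductive Frame where
  | seq (s : Stmt)
  | ifTrue (e : Expr)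
  | ifFalse (e : Expr)
  | loop1 (e1 : Expr) (s1 s2 : Stmt) (e2 : Expr)
  | loop2 (e1 : Expr) (s1 s2 : Stmt) (e2 : Expr)

/-- Configurations `⟨σ, s, π⟩` of the stack-based small-step semantics. -/
structure Config where
  store : Store
  stmt : Stmt
  stack : List Frame

/-- The stack-based small-step semantics of Janus. -/
inductive Step (Γ : String → Stmt) : Config → Config → Prop where
  | assVar {σ : Store} {x : String} {op : Op} {e : Expr} {π : List Frame} :
      Step Γ ⟨σ, .assign x op e, π⟩
        ⟨σ.update (.var x) (op.apply (σ (.var x)) (e.eval σ)), .skip, π⟩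
  | assArr {σ : Store} {x : String} {ei e : Expr} {op : Op} {π : List Frame} :
      Step Γ ⟨σ, .assignArr x ei op e, π⟩
        ⟨σ.update (.arr x (ei.eval σ)) (op.apply (σ (.arr x (ei.eval σ))) (e.eval σ)), .skip, π⟩
  | call {σ : Store} {id : String} {π : List Frame} :
      Step Γ ⟨σ, .call id, π⟩ ⟨σ, Γ id, π⟩
  | uncall {σ : Store} {id : String} {π : List Frame} :
      Step Γ ⟨σ, .uncall id, π⟩ ⟨σ, (Γ id).inv, π⟩
  | seq1 {σ : Store} {s1 s2 : Stmt} {π : List Frame} :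
      Step Γ ⟨σ, .seq s1 s2, π⟩ ⟨σ, s1, .seq s2 :: π⟩
  | seq2 {σ : Store} {s2 : Stmt} {π : List Frame} :
      Step Γ ⟨σ, .skip, .seq s2 :: π⟩ ⟨σ, s2, π⟩
  | ifTrue1 {σ : Store} {e1 e2 : Expr} {s1 s2 : Stmt} {π : List Frame} :
      e1.eval σ ≠ 0 →
      Step Γ ⟨σ, .cond e1 s1 s2 e2, π⟩ ⟨σ, s1, .ifTrue e2 :: π⟩
  | ifTrue2 {σ : Store} {e2 : Expr} {π : List Frame} :
      e2.eval σ ≠ 0 →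
      Step Γ ⟨σ, .skip, .ifTrue e2 :: π⟩ ⟨σ, .skip, π⟩
  | ifFalse1 {σ : Store} {e1 e2 : Expr} {s1 s2 : Stmt} {π : List Frame} :
      e1.eval σ = 0 →
      Step Γ ⟨σ, .cond e1 s1 s2 e2, π⟩ ⟨σ, s2, .ifFalse e2 :: π⟩
  | ifFalse2 {σ : Store} {e2 : Expr} {π : List Frame} :
      e2.eval σ = 0 →
      Step Γ ⟨σ, .skip, .ifFalse e2 :: π⟩ ⟨σ, .skip, π⟩
  | loopMain {σ : Store} {e1 e2 : Expr} {s1 s2 : Stmt} {π : List Frame} :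
      e1.eval σ ≠ 0 →
      Step Γ ⟨σ, .loop e1 s1 s2 e2, π⟩ ⟨σ, s1, .loop1 e1 s1 s2 e2 :: π⟩
  | loopBase {σ : Store} {e1 e2 : Expr} {s1 s2 : Stmt} {π : List Frame} :
      e2.eval σ ≠ 0 →
      Step Γ ⟨σ, .skip, .loop1 e1 s1 s2 e2 :: π⟩ ⟨σ, .skip, π⟩
  | loop1 {σ : Store} {e1 e2 : Expr} {s1 s2 : Stmt} {π : List Frame} :
      e2.eval σ = 0 →
      Step Γ ⟨σ, .skip, .loop1 e1 s1 s2 e2 :: π⟩ ⟨σ, s2, .loop2 e1 s1 s2 e2 :: π⟩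
  | loop2 {σ : Store} {e1 e2 : Expr} {s1 s2 : Stmt} {π : List Frame} :
      e1.eval σ = 0 →
      Step Γ ⟨σ, .skip, .loop2 e1 s1 s2 e2 :: π⟩ ⟨σ, s1, .loop1 e1 s1 s2 e2 :: π⟩


section Aux
variable {Γ : String → Stmt}

/-- Forward direction: big-step implies multi-step, with any stack. -/
theorem bigstep_to_steps {σ : Store} {s : Stmt} {σ' : Store}
    (h : BigStep Γ σ s σ') : ∀ π : List Frame,
    Relation.ReflTransGen (Step Γ) ⟨σ, s, π⟩ ⟨σ', .skip, π⟩ := by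
  induction h using BigStep.rec
    (motive_2 := fun σ e1 s1 s2 e2 σ' _ => ∀ π : List Frame,
      Relation.ReflTransGen (Step Γ) ⟨σ, .skip, .loop1 e1 s1 s2 e2 :: π⟩ ⟨σ', .skip, π⟩)
    with
  | assVar => exact fun π => Relation.ReflTransGen.single Step.assVar
  | assArr => exact fun π => Relation.ReflTransGen.single Step.assArr
  | call _ ih => exact fun π => Relation.ReflTransGen.head Step.call (ih π)
  | uncall _ ih => exact fun π => Relation.ReflTransGen.head Step.uncall (ih π)
  | seq _ _ ih1 ih2 =>
      intro π
      exact Relation.ReflTransGen.head Step.seq1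
        ((ih1 _).trans (Relation.ReflTransGen.head Step.seq2 (ih2 π)))
  | ifTrue h1 _ h2 ih =>
      intro π
      exact Relation.ReflTransGen.head (Step.ifTrue1 h1)
        ((ih _).trans (Relation.ReflTransGen.single (Step.ifTrue2 h2)))
  | ifFalse h1 _ h2 ih =>
      intro π
      exact Relation.ReflTransGen.head (Step.ifFalse1 h1)
        ((ih _).trans (Relation.ReflTransGen.single (Step.ifFalse2 h2)))
  | loopMain h1 _ _ ih1 ih2 =>
      intro π
      exact Relation.ReflTransGen.head (Step.loopMain h1) ((ih1 _).trans (ih2 π))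
  | skip => exact fun π => Relation.ReflTransGen.refl
  | base h => exact Relation.ReflTransGen.single (Step.loopBase h)
  | step h1 _ h2 _ _ ihs2 ihs1 ihl =>
      exact Relation.ReflTransGen.head (Step.loop1 h1)
        ((ihs2 _).trans (Relation.ReflTransGen.head (Step.loop2 h2)
          ((ihs1 _).trans (ihl _))))

/-- Semantics of a frame stack: evaluating all pending frames. -/
inductive EvalStack (Γ : String → Stmt) : Store → List Frame → Store → Prop where
  | nil {σ} : EvalStack Γ σ [] σ
  | seq {σ σ' σf s π} : BigStep Γ σ s σ' → EvalStack Γ σ' π σf →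
      EvalStack Γ σ (.seq s :: π) σf
  | ifTrue {σ σf e2 π} : Expr.eval σ e2 ≠ 0 → EvalStack Γ σ π σf →
      EvalStack Γ σ (.ifTrue e2 :: π) σf
  | ifFalse {σ σf e2 π} : Expr.eval σ e2 = 0 → EvalStack Γ σ π σf →
      EvalStack Γ σ (.ifFalse e2 :: π) σf
  | loop1 {σ σ' σf e1 s1 s2 e2 π} : BigLoop Γ σ e1 s1 s2 e2 σ' →
      EvalStack Γ σ' π σf → EvalStack Γ σ (.loop1 e1 s1 s2 e2 :: π) σf
  | loop2 {σ σ' σ'' σf e1 s1 s2 e2 π} : Expr.eval σ e1 = 0 → BigStep Γ σ s1 σ' →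
      BigLoop Γ σ' e1 s1 s2 e2 σ'' → EvalStack Γ σ'' π σf →
      EvalStack Γ σ (.loop2 e1 s1 s2 e2 :: π) σf

def EvalConfig (Γ : String → Stmt) (c : Config) (σf : Store) : Prop :=
  ∃ σ', BigStep Γ c.store c.stmt σ' ∧ EvalStack Γ σ' c.stack σf

theorem step_preserve {c c' : Config} (h : Step Γ c c') {σf : Store}
    (h' : EvalConfig Γ c' σf) : EvalConfig Γ c σf := by
  obtain ⟨σ', hb, hs⟩ := h'
  cases h with
  | assVar => cases hb; exact ⟨_, BigStep.assVar, hs⟩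
  | assArr => cases hb; exact ⟨_, BigStep.assArr, hs⟩
  | call => exact ⟨_, BigStep.call hb, hs⟩
  | uncall => exact ⟨_, BigStep.uncall hb, hs⟩
  | seq1 =>
      cases hs with
      | seq hb2 hs' => exact ⟨_, BigStep.seq hb hb2, hs'⟩
  | seq2 => exact ⟨_, BigStep.skip, EvalStack.seq hb hs⟩
  | ifTrue1 h1 =>
      cases hs with
      | ifTrue h2 hs' => exact ⟨_, BigStep.ifTrue h1 hb h2, hs'⟩
  | ifTrue2 h2 =>
      cases hb; exact ⟨_, BigStep.skip, EvalStack.ifTrue h2 hs⟩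
  | ifFalse1 h1 =>
      cases hs with
      | ifFalse h2 hs' => exact ⟨_, BigStep.ifFalse h1 hb h2, hs'⟩
  | ifFalse2 h2 =>
      cases hb; exact ⟨_, BigStep.skip, EvalStack.ifFalse h2 hs⟩
  | loopMain h1 =>
      cases hs with
      | loop1 hl hs' => exact ⟨_, BigStep.loopMain h1 hb hl, hs'⟩
  | loopBase h2 =>
      cases hb; exact ⟨_, BigStep.skip, EvalStack.loop1 (BigLoop.base h2) hs⟩
  | loop1 h2 =>
      cases hs with
      | loop2 he1 hb1 hl hs' =>
          exact ⟨_, BigStep.skip,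
            EvalStack.loop1 (BigLoop.step h2 hb he1 hb1 hl) hs'⟩
  | loop2 h1 =>
      cases hs with
      | loop1 hl hs' =>
          exact ⟨_, BigStep.skip, EvalStack.loop2 h1 hb hl hs'⟩

theorem steps_to_bigstep {c : Config} {σf : Store}
    (h : Relation.ReflTransGen (Step Γ) c ⟨σf, .skip, []⟩) : EvalConfig Γ c σf := by
  induction h using Relation.ReflTransGen.head_induction_on with
  | refl => exact ⟨σf, BigStep.skip, EvalStack.nil⟩
  | head hstep _ ih => exact step_preserve hstep ih

end Aux

/-- Equivalence of big-step and stack-based small-step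
semantics: `⟨ε, s⟩ ⇓ σ` iff `⟨ε, s, []⟩ →* ⟨σ, skip, []⟩`, where `ε` is the
empty store. -/
theorem stmt7_equivalence (Γ : String → Stmt) (s : Stmt) (σ : Store) :
    BigStep Γ emptyStore s σ ↔
    Relation.ReflTransGen (Step Γ) ⟨emptyStore, s, []⟩ ⟨σ, .skip, []⟩ := by
  constructor
  · intro h
    exact bigstep_to_steps h []
  · intro h
    obtain ⟨σ', hb, hs⟩ := steps_to_bigstep h
    cases hs
    exact hb
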